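/- arXiv:1206.1621 — 7 statements merged into one kernel-verified Lean document; each statement's English description precedes it below -/
import Mathlib

section
/- The number of facet-defining inequalities of a UPGMA cone on n taxa is O(n^3); more precisely it equals binomial(n+1,3) - n + 1, which is at most n^3 for all n ≥ 1. -/
/-- The number of facet-defining inequalities of a UPGMA cone on `n` taxa,
`∑_{t=2}^{n}(C(t,2)-1)`, equals `C(n+1,3) - n + 1`, which is at most `n^3`
for all `n ≥ 1`; hence the count is `O(n^3)`. -/
theorem stmt2 (n : ℕ) (hn : 1 ≤ n) :
    (∑ t ∈ Finset.Icc 2 n, ((t.choose 2 : ℤ) - 1) = ((n + 1).choose 3 : ℤ) - n + 1) ∧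
    ((n + 1).choose 3 : ℤ) - n + 1 ≤ (n : ℤ) ^ 3 := by
  have key : ∑ t ∈ Finset.Icc 2 n, ((t.choose 2 : ℤ) - 1)
      = ((n + 1).choose 3 : ℤ) - n + 1 := by
    induction n with
    | zero => omega
    | succ m ih =>
      rcases Nat.eq_zero_or_pos m with hm | hm
      · subst hm; decide
      · rw [Finset.sum_Icc_succ_top (by omega), ih hm]
        have h1 : (m + 1 + 1).choose 3 = (m + 1).choose 3 + (m + 1).choose 2 := by
          have := Nat.choose_succ_succ (m + 1) 2
          norm_num at this
          omega
        push_cast [h1]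
        ring
  refine ⟨key, ?_⟩
  rw [← key]
  calc ∑ t ∈ Finset.Icc 2 n, ((t.choose 2 : ℤ) - 1)
      ≤ ∑ _t ∈ Finset.Icc 2 n, (n : ℤ) ^ 2 := by
        apply Finset.sum_le_sum
        intro t ht
        simp only [Finset.mem_Icc] at ht
        have h2 : t.choose 2 ≤ t ^ 2 := by
          rw [Nat.choose_two_right, pow_two]
          exact (Nat.div_le_self _ _).trans (Nat.mul_le_mul_left t (by omega))
        have h3 : t ^ 2 ≤ n ^ 2 := Nat.pow_le_pow_left ht.2 2
        have : (t.choose 2 : ℤ) ≤ (n : ℤ) ^ 2 := by exact_mod_cast h2.trans h3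
        omega
    _ ≤ (n : ℤ) ^ 3 := by
        rw [Finset.sum_const, Nat.card_Icc]
        have hc : ((n + 1 - 2 : ℕ) : ℤ) ≤ (n : ℤ) := by
          have : n + 1 - 2 ≤ n := by omega
          exact_mod_cast this
        have hn2 : (0 : ℤ) ≤ (n : ℤ) ^ 2 := sq_nonneg _
        calc ((n + 1 - 2 : ℕ) : ℤ) • (n : ℤ) ^ 2 = ((n + 1 - 2 : ℕ) : ℤ) * (n : ℤ) ^ 2 := by
              simp [zsmul_eq_mul]
          _ ≤ (n : ℤ) * (n : ℤ) ^ 2 := mul_le_mul_of_nonneg_right hc hn2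
          _ = (n : ℤ) ^ 3 := by ring
end

section
/- The all-ones vector 1 ∈ R^{s(s-1)/2} satisfies with equality every inequality defining the cone P(C) of a partial chain C = π_s ⋖ … ⋖ π_t (s > t) except the single nonnegativity inequality d(λ_{j(s)}, λ_{k(s)}) ≥ 0 on the coordinate of the first merged pair, which it satisfies strictly; consequently 1 is an extreme ray of P(C). -/
open Finset

/-- Coordinates of `ℝ^{m(m-1)/2}`: pairs `j < k` of elements of `Fin m`
(the parts of the bottom partition `π_s` of the partial chain). -/
abbrev UPGMAIndex (m : ℕ) := {p : Fin m × Fin m // p.1 < p.2}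

/-- Value of a dissimilarity vector on an unordered pair `{j,k}`. -/
noncomputable def pairVal {m : ℕ} (d : UPGMAIndex m → ℝ) (j k : Fin m) : ℝ :=
  if h : j < k then d ⟨(j, k), h⟩ else if h' : k < j then d ⟨(k, j), h'⟩ else 0

/-- Size-weighted average distance between two disjoint unions of parts,
with weights `w j = |λ_j^s|`:
`(1/(W λ · W λ')) ∑_{j ∈ λ, k ∈ λ'} w j · w k · d(j,k)`. -/
noncomputable def avgDist {m : ℕ} (w : Fin m → ℕ) (d : UPGMAIndex m → ℝ)
    (lam lam' : Finset (Fin m)) : ℝ :=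
  (∑ j ∈ lam, ∑ k ∈ lam', (w j : ℝ) * (w k : ℝ) * pairVal d j k) /
    ((∑ j ∈ lam, (w j : ℝ)) * (∑ k ∈ lam', (w k : ℝ)))

/-- `v` spans an extreme ray of the cone `P`. -/
def IsExtremeRay {α : Type*} (P : Set (α → ℝ)) (v : α → ℝ) : Prop :=
  v ∈ P ∧ v ≠ 0 ∧ ∀ x ∈ P, ∀ y ∈ P, x + y = v →
    (∃ a : ℝ, 0 ≤ a ∧ x = a • v) ∧ (∃ b : ℝ, 0 ≤ b ∧ y = b • v)

/-- The UPGMA cone `P(C)` of a partial chain `C = π_s ⋖ ⋯ ⋖ π_t`: nonnegativity of all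
coordinates, and for each covering relation the inequalities saying the merged pair
`(A i, B i)` has minimal size-weighted average distance among all pairs of parts. -/
noncomputable def upgmaCone {m k : ℕ} (w : Fin m → ℕ)
    (π : Fin (k + 1) → Finpartition (Finset.univ : Finset (Fin m)))
    (A B : Fin k → Finset (Fin m)) : Set (UPGMAIndex m → ℝ) :=
  {d | (∀ e, 0 ≤ d e) ∧
    ∀ i : Fin k, ∀ A' ∈ (π i.castSucc).parts, ∀ B' ∈ (π i.castSucc).parts,
      A' ≠ B' → avgDist w d (A i) (B i) ≤ avgDist w d A' B'}

/-! The all-ones vector has average distance `1` between any two disjoint parts, so it satisfies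
every averaged inequality with equality. For extremality: the bottom partition consists of
singletons and its first merge is `{j₀}, {k₀}`, so the cone inequalities at that step say exactly
that `d(j₀, k₀)` is a minimum of all coordinates. If `x + y = 𝟏` with `x, y` in the cone, then
`x e + y e = 1 = x(j₀,k₀) + y(j₀,k₀)` with `x(j₀,k₀) ≤ x e` and `y(j₀,k₀) ≤ y e`, forcing `x` and
`y` to be constant. -/

theorem pairVal_of_lt {m : ℕ} (d : UPGMAIndex m → ℝ) {j k : Fin m} (h : j < k) :
    pairVal d j k = d ⟨(j, k), h⟩ :=
  dif_pos h

theorem pairVal_const {m : ℕ} (c : ℝ) {j k : Fin m} (h : j ≠ k) :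
    pairVal (fun _ => c) j k = c := by
  rcases h.lt_or_gt with hlt | hgt
  · exact dif_pos hlt
  · rw [pairVal, dif_neg hgt.not_gt, dif_pos hgt]

theorem avgDist_singleton {m : ℕ} (w : Fin m → ℕ) (d : UPGMAIndex m → ℝ) {j k : Fin m}
    (hj : w j ≠ 0) (hk : w k ≠ 0) :
    avgDist w d {j} {k} = pairVal d j k := by
  simp only [avgDist, Finset.sum_singleton]
  field_simp

theorem avgDist_const {m : ℕ} (w : Fin m → ℕ) (hw : ∀ j, 0 < w j) (c : ℝ)
    {lam lam' : Finset (Fin m)} (hdisj : Disjoint lam lam')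
    (hlam : lam.Nonempty) (hlam' : lam'.Nonempty) :
    avgDist w (fun _ => c) lam lam' = c := by
  have hpos : ∀ s : Finset (Fin m), s.Nonempty → (0 : ℝ) < ∑ j ∈ s, (w j : ℝ) :=
    fun s hs => Finset.sum_pos (fun j _ => by exact_mod_cast hw j) hs
  have hsum : ∑ j ∈ lam, ∑ k ∈ lam', (w j : ℝ) * (w k : ℝ) * pairVal (fun _ => c) j k
      = c * ((∑ j ∈ lam, (w j : ℝ)) * (∑ k ∈ lam', (w k : ℝ))) := by
    rw [Finset.sum_mul_sum, Finset.mul_sum]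
    refine Finset.sum_congr rfl fun j hj => ?_
    rw [Finset.mul_sum]
    refine Finset.sum_congr rfl fun k hk => ?_
    rw [pairVal_const c fun hjk : j = k => Finset.disjoint_left.1 hdisj hj (hjk ▸ hk)]
    ring
  rw [avgDist, hsum, mul_div_cancel_right₀ _ (mul_pos (hpos _ hlam) (hpos _ hlam')).ne']

theorem avgDist_const_of_mem_parts {m : ℕ} {s : Finset (Fin m)} (P : Finpartition s)
    (w : Fin m → ℕ) (hw : ∀ j, 0 < w j) (c : ℝ) {A' B' : Finset (Fin m)}
    (hA' : A' ∈ P.parts) (hB' : B' ∈ P.parts) (hne : A' ≠ B') :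
    avgDist w (fun _ => c) A' B' = c :=
  avgDist_const w hw c (P.disjoint hA' hB' hne) (P.nonempty_of_mem_parts hA')
    (P.nonempty_of_mem_parts hB')

theorem isExtremeRay_one_of_apply_le {α : Type*} {P : Set (α → ℝ)} (hone : (fun _ => 1) ∈ P)
    (e₀ : α) (hnonneg : ∀ x ∈ P, 0 ≤ x e₀) (hmin : ∀ x ∈ P, ∀ e, x e₀ ≤ x e) :
    IsExtremeRay P (fun _ => 1) := by
  refine ⟨hone, fun h => one_ne_zero (congrFun h e₀), fun x hx y hy hxy => ?_⟩
  have hconst : ∀ e, x e = x e₀ ∧ y e = y e₀ := fun e => by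
    have he := congrFun hxy e
    have he₀ := congrFun hxy e₀
    simp only [Pi.add_apply] at he he₀
    have := hmin x hx e
    have := hmin y hy e
    constructor <;> linarith
  exact ⟨⟨x e₀, hnonneg x hx, funext fun e => by simp [(hconst e).1]⟩,
    ⟨y e₀, hnonneg y hy, funext fun e => by simp [(hconst e).2]⟩⟩

section upgmaCone

variable {m k : ℕ} {w : Fin m → ℕ}
  {π : Fin (k + 1) → Finpartition (Finset.univ : Finset (Fin m))} {A B : Fin k → Finset (Fin m)}

theorem avgDist_one_eq_of_mem_parts (hw : ∀ j, 0 < w j)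
    (hmem : ∀ i : Fin k,
      A i ∈ (π i.castSucc).parts ∧ B i ∈ (π i.castSucc).parts ∧ A i ≠ B i)
    (i : Fin k) {A' B' : Finset (Fin m)} (hA' : A' ∈ (π i.castSucc).parts)
    (hB' : B' ∈ (π i.castSucc).parts) (hne : A' ≠ B') :
    avgDist w (fun _ => (1 : ℝ)) (A i) (B i) = avgDist w (fun _ => (1 : ℝ)) A' B' := by
  obtain ⟨hAi, hBi, hABi⟩ := hmem i
  rw [avgDist_const_of_mem_parts _ w hw 1 hAi hBi hABi,
    avgDist_const_of_mem_parts _ w hw 1 hA' hB' hne]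

theorem one_mem_upgmaCone (hw : ∀ j, 0 < w j)
    (hmem : ∀ i : Fin k,
      A i ∈ (π i.castSucc).parts ∧ B i ∈ (π i.castSucc).parts ∧ A i ≠ B i) :
    (fun _ => (1 : ℝ)) ∈ upgmaCone w π A B :=
  ⟨fun _ => zero_le_one, fun i _ hA' _ hB' hne =>
    (avgDist_one_eq_of_mem_parts hw hmem i hA' hB' hne).le⟩

theorem apply_le_of_mem_upgmaCone (hk : 0 < k) (hw : ∀ j, 0 < w j)
    (hbot : (π 0).parts = Finset.univ.image (fun j : Fin m => ({j} : Finset (Fin m))))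
    {j₀ k₀ : Fin m} (h₀ : j₀ < k₀) (hA0 : A ⟨0, hk⟩ = {j₀}) (hB0 : B ⟨0, hk⟩ = {k₀})
    {x : UPGMAIndex m → ℝ} (hx : x ∈ upgmaCone w π A B) (e : UPGMAIndex m) :
    x ⟨(j₀, k₀), h₀⟩ ≤ x e := by
  obtain ⟨⟨j, j'⟩, hjj'⟩ := e
  have hsingleton : ∀ i : Fin m, ({i} : Finset (Fin m)) ∈ (π (⟨0, hk⟩ : Fin k).castSucc).parts :=
    fun i => hbot ▸ Finset.mem_image_of_mem _ (Finset.mem_univ i)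
  have h := hx.2 ⟨0, hk⟩ {j} (hsingleton j) {j'} (hsingleton j')
    (Finset.singleton_inj.not.2 hjj'.ne)
  rwa [hA0, hB0, avgDist_singleton w x (hw _).ne' (hw _).ne',
    avgDist_singleton w x (hw _).ne' (hw _).ne', pairVal_of_lt x h₀, pairVal_of_lt x hjj'] at h

end upgmaCone

theorem stmt9_general (m k : ℕ) (hk : 0 < k)
    (w : Fin m → ℕ) (hw : ∀ j, 0 < w j)
    (π : Fin (k + 1) → Finpartition (Finset.univ : Finset (Fin m)))
    (hbot : (π 0).parts = Finset.univ.image (fun j : Fin m => ({j} : Finset (Fin m))))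
    (A B : Fin k → Finset (Fin m))
    (hmem : ∀ i : Fin k,
      A i ∈ (π i.castSucc).parts ∧ B i ∈ (π i.castSucc).parts ∧ A i ≠ B i)
    (j₀ k₀ : Fin m) (h₀ : j₀ < k₀)
    (hA0 : A ⟨0, hk⟩ = {j₀}) (hB0 : B ⟨0, hk⟩ = {k₀}) :
    (∀ i : Fin k, ∀ A' ∈ (π i.castSucc).parts, ∀ B' ∈ (π i.castSucc).parts, A' ≠ B' →
        avgDist w (fun _ => (1 : ℝ)) (A i) (B i) = avgDist w (fun _ => (1 : ℝ)) A' B') ∧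
    (0 : ℝ) < (fun _ : UPGMAIndex m => (1 : ℝ)) ⟨(j₀, k₀), h₀⟩ ∧
    IsExtremeRay (upgmaCone w π A B) (fun _ => (1 : ℝ)) :=
  ⟨fun i _ hA' _ hB' hne => avgDist_one_eq_of_mem_parts hw hmem i hA' hB' hne, one_pos,
    isExtremeRay_one_of_apply_le (one_mem_upgmaCone hw hmem) ⟨(j₀, k₀), h₀⟩
      (fun _ hx => hx.1 _)
      (fun _ hx => apply_le_of_mem_upgmaCone hk hw hbot h₀ hA0 hB0 hx)⟩

/-- The all-ones vector `𝟏 ∈ ℝ^{s(s-1)/2}` satisfies every averaged-distance defining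
inequality of the cone `P(C)` of a partial chain `C = π_s ⋖ ⋯ ⋖ π_t` (with `s > t`) with
equality, satisfies strictly the nonnegativity inequality on the coordinate of the first
merged pair `(λ_{j(s)}, λ_{k(s)})`, and consequently `𝟏` is an extreme ray of `P(C)`. -/
theorem stmt9 (m k : ℕ) (hm : 2 ≤ m) (hk : 0 < k)
    (w : Fin m → ℕ) (hw : ∀ j, 0 < w j)
    (π : Fin (k + 1) → Finpartition (Finset.univ : Finset (Fin m)))
    (hbot : (π 0).parts = Finset.univ.image (fun j : Fin m => ({j} : Finset (Fin m))))
    (A B : Fin k → Finset (Fin m))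
    (hmem : ∀ i : Fin k,
      A i ∈ (π i.castSucc).parts ∧ B i ∈ (π i.castSucc).parts ∧ A i ≠ B i)
    (hcov : ∀ i : Fin k,
      (π i.succ).parts = insert (A i ∪ B i) ((π i.castSucc).parts \ {A i, B i}))
    (j₀ k₀ : Fin m) (h₀ : j₀ < k₀)
    (hA0 : A ⟨0, hk⟩ = {j₀}) (hB0 : B ⟨0, hk⟩ = {k₀}) :
    (∀ i : Fin k, ∀ A' ∈ (π i.castSucc).parts, ∀ B' ∈ (π i.castSucc).parts, A' ≠ B' →
        avgDist w (fun _ => (1 : ℝ)) (A i) (B i) = avgDist w (fun _ => (1 : ℝ)) A' B') ∧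
    (0 : ℝ) < (fun _ : UPGMAIndex m => (1 : ℝ)) ⟨(j₀, k₀), h₀⟩ ∧
    IsExtremeRay (upgmaCone w π A B) (fun _ => (1 : ℝ)) :=
  stmt9_general m k hk w hw π hbot A B hmem j₀ k₀ h₀ hA0 hB0
end

section
/- Let φ: R^n → R^m be a coordinate substitution (φ(e_i) = c_i e_{α(i)} with c_i > 0 for a map α: [n] → [m]), let D ⊆ R^m be a polyhedral cone, and let C = R^n_{≥0} ∩ φ^{-1}(D) with φ(C) = D. Then every extreme ray of C maps under φ onto an extreme ray of D. -/
open Finset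

theorem IsExtremeRay.map {ι κ : Type*} {C : Set (ι → ℝ)} {D : Set (κ → ℝ)} {v : ι → ℝ}
    (hv : IsExtremeRay C v) (φ : (ι → ℝ) →ₗ[ℝ] (κ → ℝ)) (hφv : φ v ∈ D) (hφv0 : φ v ≠ 0)
    (hlift : ∀ x ∈ D, ∀ y ∈ D, x + y = φ v →
      ∃ x' ∈ C, ∃ y' ∈ C, x' + y' = v ∧ φ x' = x ∧ φ y' = y) :
    IsExtremeRay D (φ v) := by
  refine ⟨hφv, hφv0, fun x hx y hy hxy => ?_⟩
  obtain ⟨x', hx', y', hy', hsum, rfl, rfl⟩ := hlift x hx y hy hxy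
  obtain ⟨⟨a, ha, rfl⟩, ⟨b, hb, rfl⟩⟩ := hv.2.2 x' hx' y' hy' hsum
  exact ⟨⟨a, ha, map_smul φ a v⟩, ⟨b, hb, map_smul φ b v⟩⟩

section CoordSubst

variable {ι κ : Type*} [Fintype ι] [DecidableEq κ]

/-- The coordinate substitution `e i ↦ c i • e (α i)`. -/
def coordSubst (α : ι → κ) (c : ι → ℝ) : (ι → ℝ) →ₗ[ℝ] (κ → ℝ) where
  toFun x j := ∑ i ∈ univ.filter (fun i => α i = j), c i * x i
  map_add' x y := by ext j; simp [mul_add, sum_add_distrib]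
  map_smul' a x := by ext j; simp [mul_sum, mul_left_comm]

variable {α : ι → κ} {c : ι → ℝ}

theorem coordSubst_apply (x : ι → ℝ) (j : κ) :
    coordSubst α c x j = ∑ i ∈ univ.filter (fun i => α i = j), c i * x i :=
  rfl

theorem coordSubst_nonneg (hc : 0 ≤ c) {x : ι → ℝ} (hx : 0 ≤ x) : 0 ≤ coordSubst α c x :=
  fun _ => sum_nonneg fun i _ => mul_nonneg (hc i) (hx i)

theorem coordSubst_apply_pos (hc : ∀ i, 0 < c i) {x : ι → ℝ} (hx : 0 ≤ x) {i : ι}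
    (hxi : 0 < x i) : 0 < coordSubst α c x (α i) :=
  calc 0 < c i * x i := mul_pos (hc i) hxi
    _ ≤ coordSubst α c x (α i) :=
      single_le_sum (fun i' _ => mul_nonneg (hc i').le (hx i')) (by simp)

theorem coordSubst_ne_zero (hc : ∀ i, 0 < c i) {x : ι → ℝ} (hx : 0 ≤ x) (hx0 : x ≠ 0) :
    coordSubst α c x ≠ 0 := by
  obtain ⟨i, hi⟩ := Function.ne_iff.mp hx0
  intro h
  simpa [h] using coordSubst_apply_pos (α := α) hc hx ((hx i).lt_of_ne' hi)

variable (α c) in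
noncomputable def coordLift (v : ι → ℝ) (z : κ → ℝ) : ι → ℝ :=
  fun i => v i * z (α i) / coordSubst α c v (α i)

theorem coordLift_add (v : ι → ℝ) (z z' : κ → ℝ) :
    coordLift α c v (z + z') = coordLift α c v z + coordLift α c v z' := by
  ext i; simp [coordLift, mul_add, add_div]

theorem coordLift_nonneg (hc : 0 ≤ c) {v : ι → ℝ} (hv : 0 ≤ v) {z : κ → ℝ} (hz : 0 ≤ z) :
    0 ≤ coordLift α c v z :=
  fun i => div_nonneg (mul_nonneg (hv i) (hz _)) (coordSubst_nonneg hc hv _)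

theorem coordLift_coordSubst_self (hc : ∀ i, 0 < c i) {v : ι → ℝ} (hv : 0 ≤ v) :
    coordLift α c v (coordSubst α c v) = v := by
  ext i
  rcases (hv i).eq_or_lt with hvi | hvi
  · simp [coordLift, ← hvi]
  · exact mul_div_cancel_right₀ _ (coordSubst_apply_pos hc hv hvi).ne'

theorem coordSubst_coordLift {v : ι → ℝ} {z : κ → ℝ}
    (hz : ∀ j, coordSubst α c v j = 0 → z j = 0) :
    coordSubst α c (coordLift α c v z) = z := by
  ext j
  have hterm : ∀ i ∈ univ.filter (fun i => α i = j),
      c i * coordLift α c v z i = c i * v i * (z j / coordSubst α c v j) := by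
    intro i hi
    rw [(mem_filter.mp hi).2.symm, coordLift]
    ring
  rw [coordSubst_apply, sum_congr rfl hterm, ← sum_mul, ← coordSubst_apply]
  by_cases h : coordSubst α c v j = 0
  · simp [h, hz j h]
  · exact mul_div_cancel₀ _ h

theorem exists_coordSubst_lift (hc : ∀ i, 0 < c i) {v : ι → ℝ} (hv : 0 ≤ v) {x y : κ → ℝ}
    (hx : 0 ≤ x) (hy : 0 ≤ y) (hxy : x + y = coordSubst α c v) :
    ∃ x' y', 0 ≤ x' ∧ 0 ≤ y' ∧ x' + y' = v ∧ coordSubst α c x' = x ∧ coordSubst α c y' = y := by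
  have hvanish : ∀ j, coordSubst α c v j = 0 → x j = 0 ∧ y j = 0 := fun j hj =>
    (add_eq_zero_iff_of_nonneg (hx j) (hy j)).mp (by rw [← hj, ← hxy, Pi.add_apply])
  have hc₀ : 0 ≤ c := fun i => (hc i).le
  refine ⟨coordLift α c v x, coordLift α c v y, coordLift_nonneg hc₀ hv hx,
    coordLift_nonneg hc₀ hv hy, ?_, coordSubst_coordLift fun j hj => (hvanish j hj).1,
    coordSubst_coordLift fun j hj => (hvanish j hj).2⟩
  rw [← coordLift_add, hxy, coordLift_coordSubst_self hc hv]

end CoordSubst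

theorem stmt11_general (n m : ℕ) (α : Fin n → Fin m) (c : Fin n → ℝ) (hc : ∀ i, 0 < c i)
    (D : Set (Fin m → ℝ))
    (φ : (Fin n → ℝ) → (Fin m → ℝ))
    (hφ : ∀ x j, φ x j = ∑ i ∈ Finset.univ.filter (fun i => α i = j), c i * x i)
    (C : Set (Fin n → ℝ))
    (hC : C = {x | ∀ i, 0 ≤ x i} ∩ φ ⁻¹' D)
    (himg : φ '' C = D) :
    ∀ v, IsExtremeRay C v → IsExtremeRay D (φ v) := by
  obtain rfl : φ = coordSubst α c := funext fun x => funext (hφ x)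
  subst hC
  have hD₀ : ∀ y ∈ D, 0 ≤ y := by
    rw [← himg]
    rintro _ ⟨x, hx, rfl⟩
    exact coordSubst_nonneg (fun i => (hc i).le) hx.1
  intro v hv
  have hv₀ : 0 ≤ v := hv.1.1
  refine hv.map (coordSubst α c) hv.1.2 (coordSubst_ne_zero hc hv₀ hv.2.1) ?_
  intro x hx y hy hxy
  obtain ⟨x', y', hx', hy', hsum, rfl, rfl⟩ :=
    exists_coordSubst_lift hc hv₀ (hD₀ x hx) (hD₀ y hy) hxy
  exact ⟨x', ⟨hx', hx⟩, y', ⟨hy', hy⟩, hsum, rfl, rfl⟩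

/-- Coordinate substitution lemma: let `φ : ℝ^n → ℝ^m` be a coordinate substitution
(`φ(e_i) = c_i e_{α(i)}`, `c_i > 0`), `D ⊆ ℝ^m` a polyhedral cone, and
`C = ℝ^n_{≥0} ∩ φ⁻¹(D)` with `φ(C) = D`. Then every extreme ray of `C` maps under `φ`
onto an extreme ray of `D`. -/
theorem stmt11 (n m : ℕ) (α : Fin n → Fin m) (c : Fin n → ℝ) (hc : ∀ i, 0 < c i)
    (ι : Type*) [Fintype ι] (f : ι → (Fin m → ℝ) →ₗ[ℝ] ℝ)
    (D : Set (Fin m → ℝ)) (hD : D = {y | ∀ i, 0 ≤ f i y})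
    (φ : (Fin n → ℝ) → (Fin m → ℝ))
    (hφ : ∀ x j, φ x j = ∑ i ∈ Finset.univ.filter (fun i => α i = j), c i * x i)
    (C : Set (Fin n → ℝ))
    (hC : C = {x | ∀ i, 0 ≤ x i} ∩ φ ⁻¹' D)
    (himg : φ '' C = D) :
    ∀ v, IsExtremeRay C v → IsExtremeRay D (φ v) :=
  stmt11_general n m α c hc D φ hφ C hC himg
end

section
/- With φ, α, c, D, C as in the coordinate substitution lemma, the extreme rays of C are exactly the vectors of the form sum_j (a_j / c_{β(j)}) e_{β(j)}, where sum_j a_j e_j ranges over extreme rays of D and β: [m] → [n] ranges over sections of α (α(β(j)) = j for all j). -/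
lemma aux_sum_single {n m : ℕ} (α : Fin n → Fin m) (β : Fin m → Fin n)
    (hβ : ∀ j, α (β j) = j) (g : Fin m → ℝ) (i : Fin n) :
    (∑ j : Fin m, (Pi.single (β j) (g j) : Fin n → ℝ)) i
      = if β (α i) = i then g (α i) else 0 := by
  simp only [Finset.sum_apply]
  rw [Finset.sum_eq_single (α i)]
  · by_cases h : β (α i) = i
    · rw [if_pos h, h, Pi.single_eq_same]
    · rw [if_neg h, Pi.single_eq_of_ne (fun e => h e.symm)]
  · intro j _ hj
    apply Pi.single_eq_of_ne
    intro e
    exact hj (by rw [e, hβ])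
  · simp

/-- Coordinate substitution lemma, full characterization: with `φ(e_i) = c_i e_{α(i)}`,
`c_i > 0`, `α` surjective, `D ⊆ ℝ^m` a pointed polyhedral cone, and
`C = ℝ^n_{≥0} ∩ φ⁻¹(D)` with `φ(C) = D`, the extreme rays of `C` are exactly the vectors
`∑_j (a_j / c_{β(j)}) e_{β(j)}` where `∑_j a_j e_j` is an extreme ray of `D` and `β` is a
section of `α`. -/
theorem stmt12 (n m : ℕ) (α : Fin n → Fin m) (hα : Function.Surjective α)
    (c : Fin n → ℝ) (hc : ∀ i, 0 < c i)
    (ι : Type*) [Fintype ι] (f : ι → (Fin m → ℝ) →ₗ[ℝ] ℝ)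
    (D : Set (Fin m → ℝ)) (hD : D = {y | ∀ i, 0 ≤ f i y})
    (hpointed : ∀ y ∈ D, -y ∈ D → y = 0)
    (φ : (Fin n → ℝ) → (Fin m → ℝ))
    (hφ : ∀ x j, φ x j = ∑ i ∈ Finset.univ.filter (fun i => α i = j), c i * x i)
    (C : Set (Fin n → ℝ))
    (hC : C = {x | ∀ i, 0 ≤ x i} ∩ φ ⁻¹' D)
    (himg : φ '' C = D) :
    ∀ v : Fin n → ℝ,
      IsExtremeRay C v ↔
        ∃ a : Fin m → ℝ, IsExtremeRay D a ∧
          ∃ β : Fin m → Fin n, (∀ j, α (β j) = j) ∧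
            v = ∑ j : Fin m, Pi.single (β j) (a j / c (β j)) := by
  classical
  have hφadd : ∀ x y, φ (x + y) = φ x + φ y := by
    intro x y; funext j
    simp only [Pi.add_apply, hφ, mul_add, Finset.sum_add_distrib]
  have hφsmul : ∀ (s : ℝ) x, φ (s • x) = s • φ x := by
    intro s x; funext j
    simp only [Pi.smul_apply, hφ, smul_eq_mul, Finset.mul_sum]
    exact Finset.sum_congr rfl fun i _ => by ring
  have hφsub : ∀ x y, φ (x - y) = φ x - φ y := by
    intro p q
    have h := hφadd (p - q) q
    rw [sub_add_cancel] at h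
    rw [h]; abel
  have hDpos : ∀ y ∈ D, ∀ j, 0 ≤ y j := by
    intro y hy j
    obtain ⟨x, hx, rfl⟩ := himg.symm.subset hy
    rw [hφ]
    rw [hC] at hx
    exact Finset.sum_nonneg fun i _ => mul_nonneg (hc i).le (hx.1 i)
  have hDcone : ∀ y ∈ D, ∀ t : ℝ, 0 ≤ t → t • y ∈ D := by
    intro y hy t ht
    rw [hD] at hy ⊢
    intro i
    rw [map_smul, smul_eq_mul]
    exact mul_nonneg ht (hy i)
  have hφsingle : ∀ (i : Fin n) (b : ℝ) (j : Fin m),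
      φ (Pi.single i b) j = if α i = j then c i * b else 0 := by
    intro i b j
    rw [hφ]
    by_cases h : α i = j
    · rw [if_pos h, Finset.sum_eq_single_of_mem i (by simp [h])]
      · rw [Pi.single_eq_same]
      · intro i' _ hne'
        rw [Pi.single_eq_of_ne hne', mul_zero]
    · rw [if_neg h, Finset.sum_eq_zero]
      intro i' hi'
      have hne' : i' ≠ i := by
        intro e
        exact h (by rw [← e]; exact (Finset.mem_filter.mp hi').2)
      rw [Pi.single_eq_of_ne hne', mul_zero]
  intro v
  constructor
  · -- forward direction
    rintro ⟨hvC, hvne, hvext⟩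
    rw [hC] at hvC
    have hvnn : ∀ i, 0 ≤ v i := hvC.1
    set a : Fin m → ℝ := φ v with ha
    have haD : a ∈ D := hvC.2
    have hfib0 : ∀ j, a j = 0 → ∀ i, α i = j → v i = 0 := by
      intro j hj i hij
      have h0 : ∑ i ∈ Finset.univ.filter (fun i => α i = j), c i * v i = 0 := by
        rw [← hφ]; exact hj
      have h1 := (Finset.sum_eq_zero_iff_of_nonneg
        (fun i _ => mul_nonneg (hc i).le (hvnn i))).mp h0 i (by simp [hij])
      rcases mul_eq_zero.mp h1 with h | h
      · exact absurd h (hc i).ne'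
      · exact h
    have hane : a ≠ 0 := by
      intro h0
      apply hvne
      funext i
      exact hfib0 (α i) (by rw [h0]; rfl) i rfl
    -- support uniqueness per fiber
    have husup : ∀ i₁ i₂, α i₁ = α i₂ → v i₁ ≠ 0 → v i₂ ≠ 0 → i₁ = i₂ := by
      intro i₁ i₂ hαeq hv1 hv2
      by_contra hne
      have hv1p : 0 < v i₁ := lt_of_le_of_ne (hvnn i₁) (Ne.symm hv1)
      have hv2p : 0 < v i₂ := lt_of_le_of_ne (hvnn i₂) (Ne.symm hv2)
      set t : ℝ := min (c i₁ * v i₁) (c i₂ * v i₂) / 2 with ht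
      have htp : 0 < t := by
        apply div_pos _ two_pos
        exact lt_min (mul_pos (hc i₁) hv1p) (mul_pos (hc i₂) hv2p)
      have ht1 : t ≤ c i₁ * v i₁ / 2 := by
        have := min_le_left (c i₁ * v i₁) (c i₂ * v i₂); rw [ht]; linarith
      have ht2 : t ≤ c i₂ * v i₂ / 2 := by
        have := min_le_right (c i₁ * v i₁) (c i₂ * v i₂); rw [ht]; linarith
      set w : Fin n → ℝ := Pi.single i₁ (t / c i₁) - Pi.single i₂ (t / c i₂) with hw
      set x := (1/2 : ℝ) • v + w with hx
      set y := (1/2 : ℝ) • v - w with hy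
      have hcan1 : c i₁ * (t / c i₁) = t := by
        rw [mul_comm]; exact div_mul_cancel₀ t (hc i₁).ne'
      have hcan2 : c i₂ * (t / c i₂) = t := by
        rw [mul_comm]; exact div_mul_cancel₀ t (hc i₂).ne'
      have hφw : φ w = 0 := by
        funext j
        rw [hw, hφsub]
        simp only [Pi.sub_apply, Pi.zero_apply, hφsingle]
        rw [hαeq, hcan1, hcan2]
        split <;> ring
      have hφx : φ x = (1/2 : ℝ) • a := by
        rw [hx, hφadd, hφw, hφsmul, add_zero]
      have hφy : φ y = (1/2 : ℝ) • a := by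
        rw [hy, hφsub, hφw, hφsmul, sub_zero]
      have hwi1 : w i₁ = t / c i₁ := by
        rw [hw, Pi.sub_apply, Pi.single_eq_same, Pi.single_eq_of_ne hne, sub_zero]
      have hwi2 : w i₂ = -(t / c i₂) := by
        rw [hw, Pi.sub_apply, Pi.single_eq_same, Pi.single_eq_of_ne (fun e => hne e.symm),
          zero_sub]
      have hwi0 : ∀ i, i ≠ i₁ → i ≠ i₂ → w i = 0 := by
        intro i h1 h2
        rw [hw, Pi.sub_apply, Pi.single_eq_of_ne h1, Pi.single_eq_of_ne h2, sub_zero]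
      have ht1' : t / c i₁ ≤ v i₁ / 2 := by
        rw [div_le_div_iff₀ (hc i₁) two_pos]
        nlinarith [ht1]
      have ht2' : t / c i₂ ≤ v i₂ / 2 := by
        rw [div_le_div_iff₀ (hc i₂) two_pos]
        nlinarith [ht2]
      have htc1 : 0 < t / c i₁ := div_pos htp (hc i₁)
      have htc2 : 0 < t / c i₂ := div_pos htp (hc i₂)
      have hxC : x ∈ C := by
        rw [hC]
        constructor
        · intro i
          rw [hx, Pi.add_apply, Pi.smul_apply, smul_eq_mul]
          by_cases h1 : i = i₁
          · rw [h1, hwi1]; linarith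
          · by_cases h2 : i = i₂
            · rw [h2, hwi2]; linarith
            · rw [hwi0 i h1 h2]
              have := hvnn i
              linarith
        · show φ x ∈ D
          rw [hφx]
          exact hDcone a haD _ (by norm_num)
      have hyC : y ∈ C := by
        rw [hC]
        constructor
        · intro i
          rw [hy, Pi.sub_apply, Pi.smul_apply, smul_eq_mul]
          by_cases h1 : i = i₁
          · rw [h1, hwi1]; linarith
          · by_cases h2 : i = i₂
            · rw [h2, hwi2]; linarith
            · rw [hwi0 i h1 h2]
              have := hvnn i
              linarith
        · show φ y ∈ D
          rw [hφy]
          exact hDcone a haD _ (by norm_num)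
      have hxy : x + y = v := by rw [hx, hy]; module
      obtain ⟨⟨s, hs, hxs⟩, _⟩ := hvext x hxC y hyC hxy
      have e1 : v i₁ / 2 + t / c i₁ = s * v i₁ := by
        have h := congrFun hxs i₁
        rw [hx, Pi.add_apply, Pi.smul_apply, smul_eq_mul, hwi1] at h
        rw [Pi.smul_apply, smul_eq_mul] at h
        linarith [h]
      have e2 : v i₂ / 2 - t / c i₂ = s * v i₂ := by
        have h := congrFun hxs i₂
        rw [hx, Pi.add_apply, Pi.smul_apply, smul_eq_mul, hwi2] at h
        rw [Pi.smul_apply, smul_eq_mul] at h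
        linarith [h]
      have hs1 : 1/2 < s := by nlinarith [e1, htc1, hv1p]
      have hs2 : s < 1/2 := by nlinarith [e2, htc2, hv2p]
      linarith
    -- define β
    obtain ⟨β, hβprop⟩ : ∃ β : Fin m → Fin n, ∀ j, α (β j) = j ∧
        (∀ i, α i = j → v i ≠ 0 → β j = i) := by
      refine ⟨fun j => if h : ∃ i, α i = j ∧ v i ≠ 0 then h.choose else (hα j).choose, ?_⟩
      intro j
      by_cases h : ∃ i, α i = j ∧ v i ≠ 0
      · simp only [dif_pos h]
        exact ⟨h.choose_spec.1, fun i hij hvi =>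
          husup h.choose i (h.choose_spec.1.trans hij.symm) h.choose_spec.2 hvi⟩
      · simp only [dif_neg h]
        exact ⟨(hα j).choose_spec, fun i hij hvi => absurd ⟨i, hij, hvi⟩ h⟩
    have hβsec : ∀ j, α (β j) = j := fun j => (hβprop j).1
    have hβsup : ∀ i, v i ≠ 0 → β (α i) = i := fun i hi => (hβprop (α i)).2 i rfl hi
    -- construction of preimages scaling v
    have hconstr : ∀ r : Fin m → ℝ, r ∈ D → (∀ j, r j ≤ a j) →
        (fun i => if a (α i) = 0 then 0 else v i * (r (α i) / a (α i))) ∈ C ∧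
        φ (fun i => if a (α i) = 0 then 0 else v i * (r (α i) / a (α i))) = r := by
      intro r hrD hra
      have hrn : ∀ j, 0 ≤ r j := hDpos r hrD
      have hφr : φ (fun i => if a (α i) = 0 then 0 else v i * (r (α i) / a (α i))) = r := by
        funext j
        rw [hφ]
        by_cases haj : a j = 0
        · rw [Finset.sum_eq_zero, eq_comm]
          · have h1 := hrn j
            have h2 := hra j
            linarith
          · intro i hi
            have hij := (Finset.mem_filter.mp hi).2
            simp only [hij, if_pos haj, mul_zero]
        · calc ∑ i ∈ Finset.univ.filter (fun i => α i = j),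
                c i * (if a (α i) = 0 then 0 else v i * (r (α i) / a (α i)))
              = ∑ i ∈ Finset.univ.filter (fun i => α i = j),
                (c i * v i) * (r j / a j) := by
                refine Finset.sum_congr rfl fun i hi => ?_
                have hij := (Finset.mem_filter.mp hi).2
                rw [hij, if_neg haj]
                ring
            _ = (∑ i ∈ Finset.univ.filter (fun i => α i = j), c i * v i) * (r j / a j) :=
                (Finset.sum_mul _ _ _).symm
            _ = a j * (r j / a j) := by rw [← hφ v j]
            _ = r j := by rw [mul_comm, div_mul_cancel₀ _ haj]
      refine ⟨?_, hφr⟩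
      rw [hC]
      constructor
      · intro i
        dsimp only
        split
        · exact le_refl 0
        · next h =>
            exact mul_nonneg (hvnn i) (div_nonneg (hrn _)
              (lt_of_le_of_ne (hDpos a haD _) (Ne.symm h)).le)
      · show φ _ ∈ D
        rw [hφr]
        exact hrD
    -- a is an extreme ray of D
    have haext : IsExtremeRay D a := by
      refine ⟨haD, hane, ?_⟩
      intro p hp q hq hpq
      have hpn : ∀ j, 0 ≤ p j := hDpos p hp
      have hqn : ∀ j, 0 ≤ q j := hDpos q hq
      have hpa : ∀ j, p j ≤ a j := by
        intro j
        have h := congrFun hpq j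
        simp only [Pi.add_apply] at h
        linarith [hqn j]
      have hqa : ∀ j, q j ≤ a j := by
        intro j
        have h := congrFun hpq j
        simp only [Pi.add_apply] at h
        linarith [hpn j]
      obtain ⟨hxC, hφxp⟩ := hconstr p hp hpa
      obtain ⟨hyC, hφyq⟩ := hconstr q hq hqa
      have hxy : (fun i => if a (α i) = 0 then 0 else v i * (p (α i) / a (α i))) +
          (fun i => if a (α i) = 0 then 0 else v i * (q (α i) / a (α i))) = v := by
        funext i
        simp only [Pi.add_apply]
        by_cases haj : a (α i) = 0
        · rw [if_pos haj, if_pos haj, add_zero]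
          exact (hfib0 (α i) haj i rfl).symm
        · rw [if_neg haj, if_neg haj]
          have hsplit : p (α i) + q (α i) = a (α i) := congrFun hpq (α i)
          calc v i * (p (α i) / a (α i)) + v i * (q (α i) / a (α i))
              = v i * ((p (α i) + q (α i)) / a (α i)) := by ring
            _ = v i * (a (α i) / a (α i)) := by rw [hsplit]
            _ = v i := by rw [div_self haj, mul_one]
      obtain ⟨⟨s, hs, hxs⟩, ⟨t, ht, hyt⟩⟩ := hvext _ hxC _ hyC hxy
      refine ⟨⟨s, hs, ?_⟩, ⟨t, ht, ?_⟩⟩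
      · rw [← hφxp, hxs, hφsmul, ← ha]
      · rw [← hφyq, hyt, hφsmul, ← ha]
    refine ⟨a, haext, β, hβsec, ?_⟩
    funext i
    rw [aux_sum_single α β hβsec]
    by_cases h : β (α i) = i
    · rw [if_pos h, h]
      have hsum : a (α i) = c i * v i := by
        rw [ha, hφ]
        rw [Finset.sum_eq_single_of_mem i (by simp)]
        intro i' hi' hne'
        have hij : α i' = α i := (Finset.mem_filter.mp hi').2
        have hvi' : v i' = 0 := by
          by_contra hvi'
          have := hβsup i' hvi'
          rw [hij, h] at this
          exact hne' this.symm
        rw [hvi', mul_zero]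
      rw [hsum, mul_comm, mul_div_assoc, div_self (hc i).ne', mul_one]
    · rw [if_neg h]
      by_contra hvi
      exact h (hβsup i hvi)
  · -- backward direction
    rintro ⟨a, ⟨haD, hane, haext⟩, β, hβ, rfl⟩
    set v : Fin n → ℝ := ∑ j : Fin m, Pi.single (β j) (a j / c (β j)) with hv
    have hvap : ∀ i, v i = if β (α i) = i then a (α i) / c i else 0 := by
      intro i
      rw [hv, aux_sum_single α β hβ]
      split
      · next h => rw [h]
      · rfl
    have hann : ∀ j, 0 ≤ a j := hDpos a haD
    have hvnn : ∀ i, 0 ≤ v i := by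
      intro i
      rw [hvap]
      split
      · exact div_nonneg (hann _) (hc i).le
      · exact le_refl _
    have hφv : φ v = a := by
      funext j
      rw [hφ]
      rw [Finset.sum_eq_single_of_mem (β j) (by simp [hβ j])]
      · have h : β (α (β j)) = β j := by rw [hβ j]
        rw [hvap, if_pos h, hβ j, mul_comm]
        exact div_mul_cancel₀ (a j) (hc (β j)).ne'
      · intro i hi hiβ
        have hij : α i = j := (Finset.mem_filter.mp hi).2
        rw [hvap, if_neg, mul_zero]
        intro h
        exact hiβ (by rw [← h, hij])
    have hvC : v ∈ C := by
      rw [hC]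
      exact ⟨hvnn, by simp only [Set.mem_preimage, hφv]; exact haD⟩
    have hvne : v ≠ 0 := by
      intro h0
      apply hane
      rw [← hφv, h0]
      funext j
      rw [hφ]
      simp
    refine ⟨hvC, hvne, ?_⟩
    have main : ∀ x ∈ C, ∀ y ∈ C, x + y = v → ∀ s : ℝ, φ x = s • a → x = s • v := by
      intro x hxC yy hyC hxy s hφxs
      rw [hC] at hxC hyC
      have hzero : ∀ i, ¬ (β (α i) = i) → x i = 0 := by
        intro i hi
        have hvi : v i = 0 := by rw [hvap, if_neg hi]
        have h1 : x i + yy i = 0 := by rw [← hvi]; exact congrFun hxy i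
        have := hxC.1 i
        have := hyC.1 i
        linarith
      funext i
      simp only [Pi.smul_apply, smul_eq_mul]
      by_cases h : β (α i) = i
      · have hφxj : φ x (α i) = c i * x i := by
          rw [hφ]
          rw [Finset.sum_eq_single_of_mem i (by simp)]
          · intro i' hi' hne'
            have hij : α i' = α i := (Finset.mem_filter.mp hi').2
            rw [hzero i' (fun e => hne' (by rw [← e, hij, h])), mul_zero]
        have heq : c i * x i = s * a (α i) := by
          rw [← hφxj, hφxs]; rfl
        have hvi : v i = a (α i) / c i := by rw [hvap, if_pos h]
        rw [hvi]
        apply mul_left_cancel₀ (hc i).ne'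
        rw [heq, mul_comm (c i), mul_assoc, div_mul_cancel₀ _ (hc i).ne']
      · rw [hzero i h, hvap, if_neg h, mul_zero]
    intro x hx y hy hxy
    have hφsplit : φ x + φ y = a := by rw [← hφadd, hxy, hφv]
    have hx' := hx
    have hy' := hy
    rw [hC] at hx' hy'
    obtain ⟨⟨s, hs, hφxs⟩, ⟨t, htn, hφyt⟩⟩ := haext (φ x) hx'.2 (φ y) hy'.2 hφsplit
    exact ⟨⟨s, hs, main x hx y hy hxy s hφxs⟩,
      ⟨t, htn, main y hy x hx (by rw [add_comm]; exact hxy) t hφyt⟩⟩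
end

section
/- The UPGMA region P(T) for the 4-leaf tree T = ((12)(34)) is not convex: the vectors v_1 = (0,0,2,2,0,1) and v_2 = (1,0,2,2,0,0) (coordinates ordered d_12,d_13,d_14,d_23,d_24,d_34) both lie in P(T), but their midpoint d = (1/2, 0, 2, 2, 0, 1/2) is not in P(T), since UPGMA applied to d first merges either {1,3} or {2,4}. -/
/-- Coordinates on `ℝ^6` are ordered `d₁₂,d₁₃,d₁₄,d₂₃,d₂₄,d₃₄` (indices `0,…,5`).
The UPGMA cone of the chain `C₁ = 1|2|3|4 ⋖ 3|4|12 ⋖ 12|34 ⋖ 1234`: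
first merge `{1,2}` (so `d₁₂` minimal), then merge `{3},{4}` among `12|3|4`. -/
def upgmaConeC1 : Set (Fin 6 → ℝ) :=
  {d | (∀ i, 0 ≤ d i) ∧
    d 0 ≤ d 1 ∧ d 0 ≤ d 2 ∧ d 0 ≤ d 3 ∧ d 0 ≤ d 4 ∧ d 0 ≤ d 5 ∧
    d 5 ≤ (d 1 + d 3) / 2 ∧ d 5 ≤ (d 2 + d 4) / 2}

/-- The UPGMA cone of the chain `C₂ = 1|2|3|4 ⋖ 1|2|34 ⋖ 34|12 ⋖ 1234`:
first merge `{3,4}` (so `d₃₄` minimal), then merge `{1},{2}` among `1|2|34`. -/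
def upgmaConeC2 : Set (Fin 6 → ℝ) :=
  {d | (∀ i, 0 ≤ d i) ∧
    d 5 ≤ d 0 ∧ d 5 ≤ d 1 ∧ d 5 ≤ d 2 ∧ d 5 ≤ d 3 ∧ d 5 ≤ d 4 ∧
    d 0 ≤ (d 1 + d 2) / 2 ∧ d 0 ≤ (d 3 + d 4) / 2}

/-- The UPGMA region `P(T)` for the 4-leaf tree `T = ((12)(34))`:
the union of the cones of the two chains returning `T`. -/
def upgmaRegionT : Set (Fin 6 → ℝ) := upgmaConeC1 ∪ upgmaConeC2

lemma notMem_upgmaRegionT_of_lt {d : Fin 6 → ℝ} (h12 : d 1 < d 0) (h34 : d 1 < d 5) :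
    d ∉ upgmaRegionT := by
  rintro (⟨-, h, -⟩ | ⟨-, -, h, -⟩) <;> linarith

lemma not_convex_of_midpoint_notMem {𝕜 E : Type*} [Field 𝕜] [LinearOrder 𝕜]
    [IsStrictOrderedRing 𝕜] [AddCommMonoid E] [Module 𝕜 E] {s : Set E} {x y : E}
    (hx : x ∈ s) (hy : y ∈ s) (hxy : (1 / 2 : 𝕜) • x + (1 / 2 : 𝕜) • y ∉ s) :
    ¬ Convex 𝕜 s :=
  fun hs => hxy (hs hx hy (by positivity) (by positivity) (by norm_num))

lemma mem_upgmaConeC1 : (![0, 0, 2, 2, 0, 1] : Fin 6 → ℝ) ∈ upgmaConeC1 := by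
  refine ⟨fun i => ?_, ?_⟩
  · fin_cases i <;> simp
  · simp

lemma mem_upgmaConeC2 : (![1, 0, 2, 2, 0, 0] : Fin 6 → ℝ) ∈ upgmaConeC2 := by
  refine ⟨fun i => ?_, ?_⟩
  · fin_cases i <;> simp
  · simp

/-- `P(T)` for `T = ((12)(34))` is not convex: `v₁ = (0,0,2,2,0,1)` and
`v₂ = (1,0,2,2,0,0)` lie in `P(T)` but their midpoint `d = (1/2,0,2,2,0,1/2)` does not,
since the minimum coordinate of `d` is attained at `d₁₃` and `d₂₄` but not at `d₁₂` or
`d₃₄`, so UPGMA first merges `{1,3}` or `{2,4}`. -/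
theorem stmt14 :
    (![0, 0, 2, 2, 0, 1] : Fin 6 → ℝ) ∈ upgmaRegionT ∧
    (![1, 0, 2, 2, 0, 0] : Fin 6 → ℝ) ∈ upgmaRegionT ∧
    ((1 / 2 : ℝ) • (![0, 0, 2, 2, 0, 1] : Fin 6 → ℝ) +
        (1 / 2 : ℝ) • (![1, 0, 2, 2, 0, 0] : Fin 6 → ℝ)) =
      (![1 / 2, 0, 2, 2, 0, 1 / 2] : Fin 6 → ℝ) ∧
    (∀ i, (![1 / 2, 0, 2, 2, 0, 1 / 2] : Fin 6 → ℝ) 1 ≤ ![1 / 2, 0, 2, 2, 0, 1 / 2] i) ∧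
    (![1 / 2, 0, 2, 2, 0, 1 / 2] : Fin 6 → ℝ) 1 = ![1 / 2, 0, 2, 2, 0, 1 / 2] 4 ∧
    (![1 / 2, 0, 2, 2, 0, 1 / 2] : Fin 6 → ℝ) 1 < ![1 / 2, 0, 2, 2, 0, 1 / 2] 0 ∧
    (![1 / 2, 0, 2, 2, 0, 1 / 2] : Fin 6 → ℝ) 1 < ![1 / 2, 0, 2, 2, 0, 1 / 2] 5 ∧
    (![1 / 2, 0, 2, 2, 0, 1 / 2] : Fin 6 → ℝ) ∉ upgmaRegionT ∧
    ¬ Convex ℝ upgmaRegionT := by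
  have hmid : (1 / 2 : ℝ) • (![0, 0, 2, 2, 0, 1] : Fin 6 → ℝ) +
      (1 / 2 : ℝ) • (![1, 0, 2, 2, 0, 0] : Fin 6 → ℝ) = ![1 / 2, 0, 2, 2, 0, 1 / 2] := by
    ext i; fin_cases i <;> norm_num
  have hout : (![1 / 2, 0, 2, 2, 0, 1 / 2] : Fin 6 → ℝ) ∉ upgmaRegionT :=
    notMem_upgmaRegionT_of_lt (by simp) (by simp)
  refine ⟨Or.inl mem_upgmaConeC1, Or.inr mem_upgmaConeC2, hmid, fun i => ?_,
    by simp, by simp, by simp, hout, ?_⟩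
  · fin_cases i <;> norm_num
  · exact not_convex_of_midpoint_notMem (Or.inl mem_upgmaConeC1) (Or.inr mem_upgmaConeC2)
      (hmid ▸ hout)
end

section
/- For a maximal chain C in Π_n, the total number of extreme rays of the UPGMA cone P(C) given by Theorem (traversal characterization) is sum over s from 2 to n of prod_{i=1}^{s} |λ_i^s|^{s-1} (plus no unit vectors since π_t = 1-block), and for the chain corresponding to the balanced merging this quantity grows exponentially in n; in particular it is at least 2^{n-2} for n ≥ 2 for any maximal chain containing a partition with a part of size ≥ 2 at each level. -/
/-! A single level already suffices: for `n ≥ 3` the level `s = n - 1` has a part of size at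
least `2`, so its term is at least `2 ^ (s - 1) = 2 ^ (n - 2)`; for `n = 2` every term is a
product of positive numbers, hence at least `1 = 2 ^ 0`. -/

theorem two_pow_le_prod_pow {ι : Type*} [Fintype ι] (f : ι → ℕ) (hf : ∀ i, 0 < f i)
    {i₀ : ι} (hi₀ : 2 ≤ f i₀) (k : ℕ) : 2 ^ k ≤ ∏ i, f i ^ k := by
  rw [Finset.prod_pow]
  apply Nat.pow_le_pow_left
  calc 2 ≤ f i₀ := hi₀
    _ ≤ ∏ i, f i :=
      Nat.le_of_dvd (Finset.prod_pos fun i _ => hf i)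
        (Finset.dvd_prod_of_mem f (Finset.mem_univ i₀))

theorem stmt16_general (n : ℕ) (hn : 2 ≤ n)
    (lam : (s : ℕ) → Fin s → ℕ)
    (hpos : ∀ s, 2 ≤ s → s ≤ n → ∀ i, 0 < lam s i)
    (hbig : ∀ s, 2 ≤ s → s < n → ∃ i, 2 ≤ lam s i) :
    2 ^ (n - 2) ≤ ∑ s ∈ Finset.Icc 2 n, ∏ i, lam s i ^ (s - 1) := by
  have term_le_sum : ∀ s ∈ Finset.Icc 2 n,
      ∏ i, lam s i ^ (s - 1) ≤ ∑ t ∈ Finset.Icc 2 n, ∏ i, lam t i ^ (t - 1) :=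
    fun s hs => Finset.single_le_sum (f := fun t => ∏ i, lam t i ^ (t - 1))
      (fun _ _ => Nat.zero_le _) hs
  obtain rfl | hn₃ := hn.eq_or_lt
  · calc 2 ^ (2 - 2) = 1 := rfl
      _ ≤ ∏ i, lam 2 i ^ (2 - 1) :=
        Finset.one_le_prod' fun i _ => Nat.one_le_pow _ _ (hpos 2 le_rfl le_rfl i)
      _ ≤ _ := term_le_sum 2 (by simp)
  · obtain ⟨i₀, hi₀⟩ := hbig (n - 1) (by omega) (by omega)
    calc 2 ^ (n - 2) = 2 ^ (n - 1 - 1) := by rw [Nat.sub_sub]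
      _ ≤ ∏ i, lam (n - 1) i ^ (n - 1 - 1) :=
        two_pow_le_prod_pow _ (hpos (n - 1) (by omega) (by omega)) hi₀ _
      _ ≤ _ := term_le_sum (n - 1) (Finset.mem_Icc.2 ⟨by omega, by omega⟩)

/-- For a maximal chain `C` in `Π_n` (recorded by the part sizes `lam s i = |λ_i^s|` of
the partition `π_s` with `s` parts, for `2 ≤ s ≤ n`), the total number of extreme rays of
the UPGMA cone `P(C)` is `∑_{s=2}^{n} ∏_{i=1}^{s} |λ_i^s|^{s-1}`; for any chain
containing, at each level `2 ≤ s < n`, a partition with a part of size at least `2`,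
this quantity is at least `2^{n-2}` (for `n ≥ 2`), hence grows exponentially in `n`. -/
theorem stmt16 (n : ℕ) (hn : 2 ≤ n)
    (lam : (s : ℕ) → Fin s → ℕ)
    (hpos : ∀ s, 2 ≤ s → s ≤ n → ∀ i, 0 < lam s i)
    (hsum : ∀ s, 2 ≤ s → s ≤ n → ∑ i, lam s i = n)
    (hbig : ∀ s, 2 ≤ s → s < n → ∃ i, 2 ≤ lam s i) :
    2 ^ (n - 2) ≤ ∑ s ∈ Finset.Icc 2 n, ∏ i, lam s i ^ (s - 1) :=
  stmt16_general n hn lam hpos hbig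
end

section
/- Among all maximal chains C in Π_n, the chain corresponding to the comb (caterpillar) tree—i.e., the chain in which every partition π_s has parts of sizes 1,1,…,1,n−s+1—minimizes the total number of extreme rays sum_{s=2}^{n} prod_{i=1}^{s} |λ_i^s|^{s-1} of the UPGMA cone P(C). -/
lemma prod_ge_sum_sub {α : Type*} [DecidableEq α] (t : Finset α) (f : α → ℕ)
    (h : ∀ i ∈ t, 1 ≤ f i) : ∑ i ∈ t, f i + 1 ≤ ∏ i ∈ t, f i + t.card := by
  induction t using Finset.induction_on with
  | empty => simp
  | @insert a s ha ih =>
    have hf : 1 ≤ f a := h a (Finset.mem_insert_self a s)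
    have hih := ih (fun i hi => h i (Finset.mem_insert_of_mem hi))
    have hP : 1 ≤ ∏ i ∈ s, f i :=
      Finset.one_le_prod' (fun i hi => h i (Finset.mem_insert_of_mem hi))
    rw [Finset.sum_insert ha, Finset.prod_insert ha, Finset.card_insert_of_notMem ha]
    have hxy : f a + ∏ i ∈ s, f i ≤ f a * ∏ i ∈ s, f i + 1 := by
      rcases Nat.exists_eq_add_of_le hf with ⟨x, hx⟩
      rcases Nat.exists_eq_add_of_le hP with ⟨y, hy⟩
      rw [hx, hy]; nlinarith
    omega

/-- Among all maximal chains in `Π_n` (recorded by the part sizes `lam s i = |λ_i^s|` of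
the partition `π_s` with `s` parts, for `2 ≤ s ≤ n`), the comb (caterpillar) chain, whose
partition at level `s` has part sizes `1,1,…,1,n-s+1`, minimizes the total number of
extreme rays `∑_{s=2}^{n} ∏_{i=1}^{s} |λ_i^s|^{s-1}` of the UPGMA cone `P(C)`;
the comb value is `∑_{s=2}^{n} (n-s+1)^{s-1}`. -/
theorem stmt17 (n : ℕ) (hn : 2 ≤ n)
    (lam : (s : ℕ) → Fin s → ℕ)
    (hpos : ∀ s, 2 ≤ s → s ≤ n → ∀ i, 0 < lam s i)
    (hsum : ∀ s, 2 ≤ s → s ≤ n → ∑ i, lam s i = n) :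
    ∑ s ∈ Finset.Icc 2 n, (n - s + 1) ^ (s - 1) ≤
      ∑ s ∈ Finset.Icc 2 n, ∏ i, lam s i ^ (s - 1) := by
  apply Finset.sum_le_sum
  intro s hs
  rw [Finset.mem_Icc] at hs
  have key := prod_ge_sum_sub (Finset.univ : Finset (Fin s)) (lam s)
    (fun i _ => hpos s hs.1 hs.2 i)
  rw [hsum s hs.1 hs.2, Finset.card_univ, Fintype.card_fin] at key
  have h1 : n - s + 1 ≤ ∏ i, lam s i := by omega
  calc (n - s + 1) ^ (s - 1) ≤ (∏ i, lam s i) ^ (s - 1) :=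
        Nat.pow_le_pow_left h1 _
    _ = ∏ i, lam s i ^ (s - 1) := by rw [Finset.prod_pow]
end
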